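/- (Euler's pentagonal number theorem) As formal power series, Π_{i≥1} (1 - x^i) = Σ_{λ ∈ ℤ} (-1)^λ · x^{(3λ² - λ)/2}. -/

import Mathlib

namespace Pentagonal

/-- Maximum element of a finset of naturals (0 for `∅`). -/
def mx (S : Finset ℕ) : ℕ := S.sup id
/-- Minimum element. -/
noncomputable def mn (S : Finset ℕ) : ℕ := sInf (S : Set ℕ)
/-- Bottom of the maximal "staircase" of consecutive elements at the top. -/
noncomputable def st (S : Finset ℕ) : ℕ :=
  sInf {x | x ∈ S ∧ Finset.Icc x (mx S) ⊆ S}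

/-- Franklin's involution. -/
noncomputable def frank (S : Finset ℕ) : Finset ℕ :=
  if mn S ≤ mx S - st S + 1 then
    insert (mx S + 1) ((S.erase (mn S)).erase (mx S - mn S + 1))
  else
    insert (mx S - st S + 1) (insert (st S - 1) (S.erase (mx S)))

/-- The exceptional (pentagonal) partitions. -/
def isExc (S : Finset ℕ) : Prop :=
  S = ∅ ∨ (S = Finset.Icc (mn S) (mx S) ∧ (mx S + 1 = 2 * mn S ∨ mx S + 2 = 2 * mn S))

lemma le_mx {S : Finset ℕ} {x : ℕ} (hx : x ∈ S) : x ≤ mx S := Finset.le_sup (f := id) hx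

lemma mx_mem {S : Finset ℕ} (h : S.Nonempty) : mx S ∈ S := by
  obtain ⟨x, hx, he⟩ := Finset.exists_mem_eq_sup S h id
  rw [mx, he]; exact hx

lemma mn_le {S : Finset ℕ} {x : ℕ} (hx : x ∈ S) : mn S ≤ x := Nat.sInf_le hx

lemma mn_mem {S : Finset ℕ} (h : S.Nonempty) : mn S ∈ S := by
  have : (S : Set ℕ).Nonempty := by exact_mod_cast h
  exact Nat.sInf_mem this

lemma mn_eq {S : Finset ℕ} {c : ℕ} (hc : c ∈ S) (h : ∀ x ∈ S, c ≤ x) : mn S = c :=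
  le_antisymm (mn_le hc) (h _ (mn_mem ⟨c, hc⟩))

lemma mx_eq {S : Finset ℕ} {c : ℕ} (hc : c ∈ S) (h : ∀ x ∈ S, x ≤ c) : mx S = c :=
  le_antisymm (Finset.sup_le h) (le_mx hc)

lemma st_spec {S : Finset ℕ} (h : S.Nonempty) : st S ∈ S ∧ Finset.Icc (st S) (mx S) ⊆ S := by
  have hm : mx S ∈ {x | x ∈ S ∧ Finset.Icc x (mx S) ⊆ S} := by
    refine ⟨mx_mem h, ?_⟩
    rw [Finset.Icc_self]
    simpa using mx_mem h
  exact Nat.sInf_mem ⟨_, hm⟩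

lemma st_le {S : Finset ℕ} {c : ℕ} (hc : c ∈ S) (h : Finset.Icc c (mx S) ⊆ S) : st S ≤ c :=
  Nat.sInf_le ⟨hc, h⟩

lemma st_eq {S : Finset ℕ} (hne : S.Nonempty) {c : ℕ} (hc : c ∈ S)
    (h : Finset.Icc c (mx S) ⊆ S) (h2 : c - 1 ∉ S) : st S = c := by
  refine le_antisymm (st_le hc h) ?_
  by_contra hlt
  push_neg at hlt
  have hcpos : 1 ≤ c := by
    rcases Nat.eq_zero_or_pos c with h0 | h1
    · exact absurd (h0 ▸ hc) (by simpa [h0] using h2)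
    · exact h1
  have hs := st_spec hne
  have : c - 1 ∈ Finset.Icc (st S) (mx S) := by
    rw [Finset.mem_Icc]
    exact ⟨by omega, le_trans (by omega) (le_mx hc)⟩
  exact h2 (hs.2 this)

lemma st_pred_not_mem {S : Finset ℕ} (hne : S.Nonempty) (hpos : 0 ∉ S) : st S - 1 ∉ S := by
  have hs := st_spec hne
  have h1 : 1 ≤ st S := by
    rcases Nat.eq_zero_or_pos (st S) with h0 | h1
    · exact absurd (h0 ▸ hs.1) hpos
    · exact h1
  intro hmem
  have : st S ≤ st S - 1 := by
    refine st_le hmem ?_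
    intro x hx
    rw [Finset.mem_Icc] at hx
    rcases Nat.eq_or_lt_of_le hx.1 with he | hl
    · exact he ▸ hmem
    · exact hs.2 (Finset.mem_Icc.2 ⟨by omega, hx.2⟩)
  omega

lemma caseA {S : Finset ℕ} (hne : S.Nonempty) (hpos : 0 ∉ S)
    (hA : mn S + st S ≤ mx S + 1) (hm2 : mx S + 1 ≠ 2 * mn S) :
    (0 ∉ frank S) ∧ (frank S).Nonempty ∧ (frank S).sum id = S.sum id ∧
    S.card = (frank S).card + 1 ∧ ¬ isExc (frank S) ∧ frank (frank S) = S := by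
  have hsS := mn_mem hne
  have hmS := mx_mem hne
  have hbS := (st_spec hne).1
  have hIcc := (st_spec hne).2
  have hs1 : 1 ≤ mn S := by rcases Nat.eq_zero_or_pos (mn S) with h0 | h1
                            · exact absurd (h0 ▸ hsS) hpos
                            · exact h1
  have hsb : mn S ≤ st S := mn_le hbS
  have hbm : st S ≤ mx S := le_mx hbS
  have hsm : mn S ≤ mx S := le_mx hsS
  have h2s : 2 * mn S ≤ mx S := by omega
  set u := mx S - mn S + 1 with hu
  have huS : u ∈ S := hIcc (Finset.mem_Icc.2 ⟨by omega, by omega⟩)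
  have hfr : frank S = insert (mx S + 1) ((S.erase (mn S)).erase u) := by
    rw [frank, if_pos (by omega)]
  have hnA : mx S + 1 ∉ (S.erase (mn S)).erase u := by
    intro h
    have := le_mx (Finset.mem_of_mem_erase (Finset.mem_of_mem_erase h))
    omega
  have memS' : ∀ x, x ∈ frank S ↔ x = mx S + 1 ∨ (x ∈ S ∧ x ≠ mn S ∧ x ≠ u) := by
    intro x
    simp only [hfr, Finset.mem_insert, Finset.mem_erase]
    tauto
  have pos' : 0 ∉ frank S := by
    rw [memS']
    push_neg
    exact ⟨by omega, fun h0 => absurd h0 hpos⟩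
  have ne' : (frank S).Nonempty := ⟨mx S + 1, (memS' _).2 (Or.inl rfl)⟩
  have huse : u ∈ S.erase (mn S) := Finset.mem_erase.2 ⟨by omega, huS⟩
  have hsum : (frank S).sum id = S.sum id := by
    rw [hfr, Finset.sum_insert hnA]
    have e2 := Finset.sum_erase_add (S.erase (mn S)) id huse
    have e3 := Finset.sum_erase_add S id hsS
    simp only [id_eq] at e2 e3 ⊢
    omega
  have hcard : S.card = (frank S).card + 1 := by
    have e1 : (frank S).card = ((S.erase (mn S)).erase u).card + 1 := by
      rw [hfr, Finset.card_insert_of_notMem hnA]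
    have e2 := Finset.card_erase_add_one huse
    have e3 := Finset.card_erase_add_one hsS
    omega
  have mx' : mx (frank S) = mx S + 1 := by
    refine mx_eq ((memS' _).2 (Or.inl rfl)) ?_
    intro x hx
    rcases (memS' x).1 hx with h | h
    · omega
    · have := le_mx h.1; omega
  have mnlt : ∀ x ∈ frank S, mn S < x := by
    intro x hx
    rcases (memS' x).1 hx with h | h
    · omega
    · have := mn_le h.1; omega
  have hm1lt : mn S < mn (frank S) := mnlt _ (mn_mem ne')
  have hIcc' : Finset.Icc (u + 1) (mx (frank S)) ⊆ frank S := by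
    rw [mx']
    intro x hx
    rw [Finset.mem_Icc] at hx
    rcases Nat.eq_or_lt_of_le hx.2 with he | hl
    · exact (memS' x).2 (Or.inl he)
    · refine (memS' x).2 (Or.inr ⟨hIcc (Finset.mem_Icc.2 ⟨by omega, by omega⟩), by omega, by omega⟩)
  have st' : st (frank S) = u + 1 := by
    refine st_eq ne' (hIcc' (Finset.mem_Icc.2 ⟨le_refl _, by rw [mx']; omega⟩)) hIcc' ?_
    intro h
    rcases (memS' _).1 h with h | h
    · omega
    · exact h.2.2 rfl
  have hcond : ¬ (mn (frank S) ≤ mx (frank S) - st (frank S) + 1) := by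
    rw [mx', st']; omega
  have hff : frank (frank S) = S := by
    have h1 : mx (frank S) - st (frank S) + 1 = mn S := by rw [mx', st']; omega
    have h2 : st (frank S) - 1 = u := by rw [st']; omega
    rw [frank, if_neg hcond, h1, h2, mx', hfr, Finset.erase_insert hnA,
      Finset.insert_erase huse, Finset.insert_erase hsS]
  refine ⟨pos', ne', hsum, hcard, ?_, hff⟩
  intro hexc
  rcases hexc with h0 | ⟨hEq, hd⟩
  · exact absurd h0 (Finset.nonempty_iff_ne_empty.1 ne')
  · have hstmn : st (frank S) = mn (frank S) := by
      refine st_eq ne' (mn_mem ne') ?_ ?_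
      · intro x hx; rw [← hEq] at hx; exact hx
      · intro h
        have hc := mn_le h
        have : 1 ≤ mn (frank S) := by omega
        omega
    rw [mx'] at hd
    have hmn' : mn (frank S) = u + 1 := by rw [← hstmn, st']
    omega

lemma caseB {S : Finset ℕ} (hne : S.Nonempty) (hpos : 0 ∉ S)
    (hB : mx S + 2 ≤ mn S + st S) (hm2 : mx S + 2 ≠ 2 * st S) :
    (0 ∉ frank S) ∧ (frank S).Nonempty ∧ (frank S).sum id = S.sum id ∧
    (frank S).card = S.card + 1 ∧ ¬ isExc (frank S) ∧ frank (frank S) = S := by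
  have hsS := mn_mem hne
  have hmS := mx_mem hne
  have hbS := (st_spec hne).1
  have hIcc := (st_spec hne).2
  have hs1 : 1 ≤ mn S := by rcases Nat.eq_zero_or_pos (mn S) with h0 | h1
                            · exact absurd (h0 ▸ hsS) hpos
                            · exact h1
  have hsb : mn S ≤ st S := mn_le hbS
  have hbm : st S ≤ mx S := le_mx hbS
  have hsm : mn S ≤ mx S := le_mx hsS
  have hb2 : 2 ≤ st S := by omega
  have h2b : mx S + 3 ≤ 2 * st S := by omega
  set v := mx S - st S + 1 with hv
  set w := st S - 1 with hw
  have hvw : v < w := by omega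
  have hvs : v < mn S := by omega
  have hwS : w ∉ S := st_pred_not_mem hne hpos
  have hvS : v ∉ S := fun h => by have := mn_le h; omega
  have hfr : frank S = insert v (insert w (S.erase (mx S))) := by
    rw [frank, if_neg (by omega)]
  have h2 : w ∉ S.erase (mx S) := fun h => hwS (Finset.mem_of_mem_erase h)
  have h1 : v ∉ insert w (S.erase (mx S)) := by
    simp only [Finset.mem_insert, Finset.mem_erase]
    push_neg
    exact ⟨by omega, fun _ h => hvS h⟩
  have memS' : ∀ x, x ∈ frank S ↔ x = v ∨ x = w ∨ (x ∈ S ∧ x ≠ mx S) := by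
    intro x
    simp only [hfr, Finset.mem_insert, Finset.mem_erase]
    tauto
  have pos' : 0 ∉ frank S := by
    rw [memS']
    push_neg
    exact ⟨by omega, by omega, fun h => absurd h hpos⟩
  have ne' : (frank S).Nonempty := ⟨v, (memS' _).2 (Or.inl rfl)⟩
  have hsum : (frank S).sum id = S.sum id := by
    rw [hfr, Finset.sum_insert h1, Finset.sum_insert h2]
    have e3 := Finset.sum_erase_add S id hmS
    simp only [id_eq] at e3 ⊢
    omega
  have hcard : (frank S).card = S.card + 1 := by
    rw [hfr, Finset.card_insert_of_notMem h1, Finset.card_insert_of_notMem h2]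
    have := Finset.card_erase_add_one hmS
    omega
  have mx' : mx (frank S) = mx S - 1 := by
    refine mx_eq ?_ ?_
    · rcases Nat.eq_or_lt_of_le hbm with he | hl
      · exact (memS' _).2 (Or.inr (Or.inl (by omega)))
      · exact (memS' _).2 (Or.inr (Or.inr
          ⟨hIcc (Finset.mem_Icc.2 ⟨by omega, by omega⟩), by omega⟩))
    · intro x hx
      rcases (memS' x).1 hx with h | h | h
      · omega
      · omega
      · have := le_mx h.1; omega
  have mn' : mn (frank S) = v := by
    refine mn_eq ((memS' _).2 (Or.inl rfl)) ?_
    intro x hx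
    rcases (memS' x).1 hx with h | h | h
    · omega
    · omega
    · have := mn_le h.1; omega
  have stle : st (frank S) ≤ w := by
    refine st_le ((memS' _).2 (Or.inr (Or.inl rfl))) ?_
    rw [mx']
    intro x hx
    rw [Finset.mem_Icc] at hx
    rcases Nat.eq_or_lt_of_le hx.1 with he | hl
    · exact (memS' _).2 (Or.inr (Or.inl he.symm))
    · exact (memS' _).2 (Or.inr (Or.inr
        ⟨hIcc (Finset.mem_Icc.2 ⟨by omega, by omega⟩), by omega⟩))
  have hcond : mn (frank S) ≤ mx (frank S) - st (frank S) + 1 := by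
    rw [mn', mx']; omega
  have hff : frank (frank S) = S := by
    have e1 : mx (frank S) + 1 = mx S := by rw [mx']; omega
    have e2 : mx (frank S) - mn (frank S) + 1 = w := by rw [mx', mn']; omega
    rw [frank, if_pos hcond, e1, e2, mn', hfr, Finset.erase_insert h1,
      Finset.erase_insert h2, Finset.insert_erase hmS]
  refine ⟨pos', ne', hsum, hcard, ?_, hff⟩
  intro hexc
  rcases hexc with h0 | ⟨hEq, hd⟩
  · exact absurd h0 (Finset.nonempty_iff_ne_empty.1 ne')
  · rw [mx', mn'] at hd
    omega

lemma frank_spec {S : Finset ℕ} (hne : S.Nonempty) (hpos : 0 ∉ S) (hnexc : ¬ isExc S) :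
    (0 ∉ frank S) ∧ (frank S).Nonempty ∧ (frank S).sum id = S.sum id ∧
    (S.card = (frank S).card + 1 ∨ (frank S).card = S.card + 1) ∧
    ¬ isExc (frank S) ∧ frank (frank S) = S := by
  have hsS := mn_mem hne
  have hbS := (st_spec hne).1
  have hIcc := (st_spec hne).2
  have hs1 : 1 ≤ mn S := by rcases Nat.eq_zero_or_pos (mn S) with h0 | h1
                            · exact absurd (h0 ▸ hsS) hpos
                            · exact h1
  have hsb : mn S ≤ st S := mn_le hbS
  have hbm : st S ≤ mx S := le_mx hbS
  have hsm : mn S ≤ mx S := le_mx hsS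
  have hfull : st S = mn S → S = Finset.Icc (mn S) (mx S) := by
    intro h
    apply Finset.Subset.antisymm
    · intro x hx; exact Finset.mem_Icc.2 ⟨mn_le hx, le_mx hx⟩
    · rw [← h]; exact hIcc
  by_cases hA : mn S + st S ≤ mx S + 1
  · have hm2 : mx S + 1 ≠ 2 * mn S := by
      intro he
      exact hnexc (Or.inr ⟨hfull (by omega), Or.inl he⟩)
    obtain ⟨a, b, c, d, e, f⟩ := caseA hne hpos hA hm2
    exact ⟨a, b, c, Or.inl d, e, f⟩
  · have hB : mx S + 2 ≤ mn S + st S := by omega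
    have hm2 : mx S + 2 ≠ 2 * st S := by
      intro he
      have hst : st S = mn S := by omega
      exact hnexc (Or.inr ⟨hfull hst, Or.inr (by omega)⟩)
    obtain ⟨a, b, c, d, e, f⟩ := caseB hne hpos hB hm2
    exact ⟨a, b, c, Or.inr d, e, f⟩

/-- The pentagonal staircase partition associated to `l : ℤ`. -/
def pset (l : ℤ) : Finset ℕ :=
  if 0 ≤ l then Finset.Ico l.natAbs (2 * l.natAbs) else Finset.Ioc l.natAbs (2 * l.natAbs)

lemma pset_card (l : ℤ) : (pset l).card = l.natAbs := by
  rw [pset]; split <;> simp [Nat.card_Ico, Nat.card_Ioc] <;> omega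

lemma pset_pos (l : ℤ) : 0 ∉ pset l := by
  rw [pset]; split <;> simp

lemma sum_Ico_gauss (k : ℕ) : 2 * (Finset.Ico k (2*k)).sum id + k = 3 * k^2 := by
  have h1 := Finset.sum_range_id_mul_two (2*k)
  have h2 := Finset.sum_range_id_mul_two k
  have h3 : (Finset.Ico 0 k).sum id + (Finset.Ico k (2*k)).sum id
      = (Finset.Ico 0 (2*k)).sum id :=
    Finset.sum_Ico_consecutive id (by omega) (by omega)
  rw [← Nat.Ico_zero_eq_range] at h1 h2
  simp only [id_eq] at h1 h2 h3 ⊢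
  rcases Nat.eq_zero_or_pos k with h0 | hk
  · subst h0; simp
  · zify [show 1 ≤ 2*k by omega, show 1 ≤ k by omega] at h1 h2 h3 ⊢
    nlinarith [h1, h2, h3]

lemma sum_Ioc_gauss (k : ℕ) : 2 * (Finset.Ioc k (2*k)).sum id = 3 * k^2 + k := by
  have h1 := Finset.sum_range_id_mul_two (2*k+1)
  have h2 := Finset.sum_range_id_mul_two (k+1)
  have h3 : (Finset.Ico 0 (k+1)).sum id + (Finset.Ico (k+1) (2*k+1)).sum id
      = (Finset.Ico 0 (2*k+1)).sum id :=
    Finset.sum_Ico_consecutive id (by omega) (by omega)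
  have h4 : Finset.Ioc k (2*k) = Finset.Ico (k+1) (2*k+1) := by
    ext x; simp [Nat.lt_succ_iff]
  rw [← Nat.Ico_zero_eq_range] at h1 h2
  rw [Nat.add_sub_cancel] at h1 h2
  simp only [id_eq] at h1 h2 h3 ⊢
  rw [h4]
  zify at h1 h2 h3 ⊢
  nlinarith [h1, h2, h3]

lemma pset_sum (l : ℤ) : 2 * (((pset l).sum id : ℕ) : ℤ) = 3 * l^2 - l := by
  by_cases h0 : 0 ≤ l
  · obtain ⟨k, rfl⟩ := Int.eq_ofNat_of_zero_le h0
    rw [pset, if_pos h0]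
    simp only [Int.natAbs_natCast]
    have := sum_Ico_gauss k
    zify at this
    push_cast
    nlinarith [this]
  · obtain ⟨k, rfl⟩ : ∃ k : ℕ, l = -(k : ℤ) := ⟨l.natAbs, by omega⟩
    rw [pset, if_neg h0]
    simp only [Int.natAbs_neg, Int.natAbs_natCast]
    have := sum_Ioc_gauss k
    zify at this
    push_cast
    nlinarith [this]

lemma pset_exc (l : ℤ) : isExc (pset l) := by
  rcases eq_or_ne l 0 with rfl | hne
  · left; simp [pset]
  · right
    have hk : 1 ≤ l.natAbs := by omega
    set k := l.natAbs with hkdef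
    by_cases h0 : 0 ≤ l
    · have hps : pset l = Finset.Ico k (2*k) := by rw [pset, if_pos h0]
      have hmem : k ∈ pset l := by rw [hps]; simp; omega
      have hmem2 : 2*k - 1 ∈ pset l := by rw [hps]; simp; omega
      have hmn : mn (pset l) = k := mn_eq hmem (by intro x hx; rw [hps] at hx; simp at hx; omega)
      have hmx : mx (pset l) = 2*k - 1 :=
        mx_eq hmem2 (by intro x hx; rw [hps] at hx; simp at hx; omega)
      refine ⟨?_, Or.inl (by omega)⟩
      rw [hmn, hmx, hps]
      ext x; simp; omega
    · have hps : pset l = Finset.Ioc k (2*k) := by rw [pset, if_neg h0]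
      have hmem : k + 1 ∈ pset l := by rw [hps]; simp; omega
      have hmem2 : 2*k ∈ pset l := by rw [hps]; simp; omega
      have hmn : mn (pset l) = k + 1 :=
        mn_eq hmem (by intro x hx; rw [hps] at hx; simp at hx; omega)
      have hmx : mx (pset l) = 2*k :=
        mx_eq hmem2 (by intro x hx; rw [hps] at hx; simp at hx; omega)
      refine ⟨?_, Or.inr (by omega)⟩
      rw [hmn, hmx, hps]
      ext x; simp

lemma exc_eq_pset {S : Finset ℕ} (hpos : 0 ∉ S) (hexc : isExc S) : ∃ l : ℤ, S = pset l := by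
  rcases Finset.eq_empty_or_nonempty S with rfl | hne
  · exact ⟨0, by simp [pset]⟩
  · rcases hexc with h0 | ⟨hEq, hd⟩
    · exact absurd h0 (Finset.nonempty_iff_ne_empty.1 hne)
    · have hsS := mn_mem hne
      have hs1 : 1 ≤ mn S := by
        rcases Nat.eq_zero_or_pos (mn S) with h0 | h1
        · exact absurd (h0 ▸ hsS) hpos
        · exact h1
      have hsm : mn S ≤ mx S := le_mx hsS
      have hmem : ∀ x, x ∈ S ↔ mn S ≤ x ∧ x ≤ mx S := by
        intro x
        constructor
        · intro hx; exact ⟨mn_le hx, le_mx hx⟩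
        · intro hx; rw [hEq]; exact Finset.mem_Icc.2 hx
      rcases hd with hd | hd
      · refine ⟨(mn S : ℤ), ?_⟩
        rw [pset, if_pos (by positivity), Int.natAbs_natCast]
        ext x; rw [hmem x, Finset.mem_Ico]; omega
      · have hs2 : 2 ≤ mn S := by omega
        refine ⟨-((mn S - 1 : ℕ) : ℤ), ?_⟩
        rw [pset, if_neg (by simp; omega), Int.natAbs_neg, Int.natAbs_natCast]
        ext x; rw [hmem x, Finset.mem_Ioc]; omega

open PowerSeries in
lemma expand (N : ℕ) :
    PowerSeries.coeff (R := ℤ) N (∏ i ∈ Finset.range (N + 1), (1 - PowerSeries.X ^ (i + 1))) =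
    ∑ t ∈ (Finset.range (N+1)).powerset,
      if (∑ i ∈ t, (i+1)) = N then ((-1:ℤ))^t.card else 0 := by
  have h1 : ∀ i ∈ Finset.range (N+1), (1 - X ^ (i+1) : ℤ⟦X⟧) = (-X^(i+1)) + 1 :=
    fun i _ => by ring
  rw [Finset.prod_congr rfl h1, Finset.prod_add, map_sum]
  refine Finset.sum_congr rfl ?_
  intro t ht
  rw [Finset.prod_const_one, mul_one]
  have h2 : ∏ i ∈ t, (-X^(i+1) : ℤ⟦X⟧)
      = C ((-1)^t.card) * X^(∑ i ∈ t, (i+1)) := by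
    have h3 : ∀ i ∈ t, (-X^(i+1) : ℤ⟦X⟧) = (C (-1)) * X^(i+1) := by
      intro i _; simp
    rw [Finset.prod_congr rfl h3, Finset.prod_mul_distrib, Finset.prod_const,
      ← map_pow, Finset.prod_pow_eq_pow_sum]
  rw [h2, PowerSeries.coeff_C_mul, PowerSeries.coeff_X_pow]
  by_cases h : (∑ i ∈ t, (i+1)) = N <;> simp [h] <;> omega

lemma reindex (N : ℕ) :
    ∑ t ∈ (Finset.range (N+1)).powerset.filter (fun t => ∑ i ∈ t, (i+1) = N),
        ((-1:ℤ))^t.card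
      = ∑ S ∈ (Finset.Icc 1 (N+1)).powerset.filter (fun S => S.sum id = N),
        ((-1:ℤ))^S.card := by
  refine Finset.sum_bij' (fun t _ => t.map ⟨fun i => i + 1, add_left_injective 1⟩)
    (fun S _ => S.image (fun x => x - 1)) ?_ ?_ ?_ ?_ ?_
  · intro t ht
    rw [Finset.mem_filter, Finset.mem_powerset] at ht ⊢
    constructor
    · intro x hx
      rw [Finset.mem_map] at hx
      obtain ⟨i, hi, rfl⟩ := hx
      have := Finset.mem_range.1 (ht.1 hi)
      simp only [Function.Embedding.coeFn_mk, Finset.mem_Icc]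
      omega
    · rw [Finset.sum_map]
      exact ht.2
  · intro S hS
    rw [Finset.mem_filter, Finset.mem_powerset] at hS ⊢
    constructor
    · intro x hx
      rw [Finset.mem_image] at hx
      obtain ⟨y, hy, rfl⟩ := hx
      have := Finset.mem_Icc.1 (hS.1 hy)
      rw [Finset.mem_range]; omega
    · have hinj : ∀ x ∈ S, ∀ y ∈ S, x - 1 = y - 1 → x = y := by
        intro x hx y hy hxy
        have hx1 := (Finset.mem_Icc.1 (hS.1 hx)).1
        have hy1 := (Finset.mem_Icc.1 (hS.1 hy)).1
        omega
      rw [Finset.sum_image hinj]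
      have hco : ∀ x ∈ S, x - 1 + 1 = x := by
        intro x hx; have := (Finset.mem_Icc.1 (hS.1 hx)).1; omega
      rw [Finset.sum_congr rfl hco]
      exact hS.2
  · intro t ht
    ext x
    simp only [Finset.mem_image, Finset.mem_map, Function.Embedding.coeFn_mk]
    constructor
    · rintro ⟨y, ⟨i, hi, rfl⟩, rfl⟩
      simpa using hi
    · intro hx
      exact ⟨x + 1, ⟨x, hx, rfl⟩, by omega⟩
  · intro S hS
    rw [Finset.mem_filter, Finset.mem_powerset] at hS
    ext x
    simp only [Finset.mem_map, Finset.mem_image, Function.Embedding.coeFn_mk]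
    constructor
    · rintro ⟨y, ⟨z, hz, rfl⟩, rfl⟩
      have h1 := (Finset.mem_Icc.1 (hS.1 hz)).1
      have h2 : z - 1 + 1 = z := by omega
      rwa [h2]
    · intro hx
      have := (Finset.mem_Icc.1 (hS.1 hx)).1
      exact ⟨x - 1, ⟨x, hx, rfl⟩, by omega⟩
  · intro t ht
    rw [Finset.card_map]

end Pentagonal

open Pentagonal in
/-- Euler's pentagonal number theorem, coefficientwise:
the coefficient of `x^N` in `Π_{i ≥ 1} (1 - x^i)` (for which the truncated product
`Π_{i=1}^{N+1} (1 - x^i)` suffices) is `Σ_{λ ∈ ℤ, (3λ²-λ)/2 = N} (-1)^λ`. -/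
theorem euler_pentagonal (N : ℕ) :
    PowerSeries.coeff (R := ℤ) N (∏ i ∈ Finset.range (N + 1), (1 - PowerSeries.X ^ (i + 1))) =
      ∑ᶠ l : ℤ, if (3 * l ^ 2 - l) / 2 = (N : ℤ) then (-1 : ℤ) ^ l.natAbs else 0 := by
  classical
  have pent_inj : ∀ a b : ℤ, 3 * a^2 - a = 3 * b^2 - b → a = b := by
    intro a b h
    have h2 : (a - b) * (3*(a+b) - 1) = 0 := by
      have : (a-b)*(3*(a+b)-1) = (3*a^2-a) - (3*b^2-b) := by ring
      rw [this, h, sub_self]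
    rcases mul_eq_zero.1 h2 with h3 | h3 <;> omega
  have pent_dvd : ∀ l : ℤ, (2:ℤ) ∣ 3 * l^2 - l := by
    intro l
    rcases Int.even_or_odd l with ⟨k, hk⟩ | ⟨k, hk⟩
    · exact ⟨6*k^2 - k, by subst hk; ring⟩
    · exact ⟨6*k^2 + 5*k + 1, by subst hk; ring⟩
  have pent_div : ∀ l : ℤ, ((3 * l^2 - l) / 2 = (N:ℤ)) ↔ 3 * l^2 - l = 2*(N:ℤ) := by
    intro l
    obtain ⟨c, hc⟩ := pent_dvd l
    rw [hc]
    constructor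
    · intro h; rw [Int.mul_ediv_cancel_left _ two_ne_zero] at h; omega
    · intro h; rw [Int.mul_ediv_cancel_left _ two_ne_zero]; omega
  rw [expand, ← Finset.sum_filter, reindex]
  set D := (Finset.Icc 1 (N+1)).powerset.filter (fun S => S.sum id = N) with hD
  have hmemD : ∀ S, S ∈ D ↔ (S ⊆ Finset.Icc 1 (N+1) ∧ S.sum id = N) := by
    intro S; rw [hD, Finset.mem_filter, Finset.mem_powerset]
  have hposD : ∀ S ∈ D, 0 ∉ S := by
    intro S hS h0
    have := ((hmemD S).1 hS).1 h0
    simp at this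
  have hDmem : ∀ S : Finset ℕ, 0 ∉ S → S.sum id = N → S ∈ D := by
    intro S h0 hs
    rw [hmemD]
    refine ⟨?_, hs⟩
    intro x hx
    rw [Finset.mem_Icc]
    have hx1 : 1 ≤ x := by
      rcases Nat.eq_zero_or_pos x with h | h
      · exact absurd (h ▸ hx) h0
      · exact h
    have hx2 : x ≤ S.sum id := Finset.single_le_sum (f := id) (fun i _ => Nat.zero_le i) hx
    omega
  rw [← Finset.sum_filter_add_sum_filter_not D isExc (fun S => ((-1:ℤ))^S.card)]
  have hspec : ∀ S ∈ D.filter (fun S => ¬ isExc S),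
      (0 ∉ frank S) ∧ (frank S).Nonempty ∧ (frank S).sum id = S.sum id ∧
      (S.card = (frank S).card + 1 ∨ (frank S).card = S.card + 1) ∧
      ¬ isExc (frank S) ∧ frank (frank S) = S := by
    intro S hS
    rw [Finset.mem_filter] at hS
    have hnexc := hS.2
    have hne : S.Nonempty := Finset.nonempty_iff_ne_empty.2 (fun h => hnexc (Or.inl h))
    exact frank_spec hne (hposD S hS.1) hnexc
  have hzero : ∑ S ∈ D.filter (fun S => ¬ isExc S), ((-1:ℤ))^S.card = 0 := by
    refine Finset.sum_involution (fun S _ => frank S) ?_ ?_ ?_ ?_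
    · intro S hS
      obtain ⟨_, _, _, hcc, _, _⟩ := hspec S hS
      rcases hcc with h | h
      · rw [h, pow_succ]; ring
      · rw [h, pow_succ]; ring
    · intro S hS _
      obtain ⟨_, _, _, hcc, _, _⟩ := hspec S hS
      intro heq
      have heq' : frank S = S := heq
      rw [heq'] at hcc
      omega
    · intro S hS
      obtain ⟨hp, _, hsum, _, hnx, _⟩ := hspec S hS
      rw [Finset.mem_filter]
      have hSsum : S.sum id = N := ((hmemD S).1 (Finset.mem_filter.1 hS).1).2
      exact ⟨hDmem _ hp (hsum.trans hSsum), hnx⟩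
    · intro S hS
      exact (hspec S hS).2.2.2.2.2
  rw [hzero, add_zero]
  by_cases hex : ∃ l : ℤ, 3 * l^2 - l = 2*(N:ℤ)
  · obtain ⟨l, hl⟩ := hex
    have hR : ∑ᶠ l' : ℤ, (if (3 * l'^2 - l') / 2 = (N:ℤ) then ((-1:ℤ))^l'.natAbs else 0)
        = ((-1:ℤ))^l.natAbs := by
      rw [finsum_eq_single _ l ?_]
      · rw [if_pos ((pent_div l).2 hl)]
      · intro x hx
        rw [if_neg]
        intro hc
        exact hx (pent_inj x l (by rw [(pent_div x).1 hc, hl]))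
    rw [hR]
    have hfilter : D.filter isExc = {pset l} := by
      ext S
      rw [Finset.mem_filter, Finset.mem_singleton]
      constructor
      · rintro ⟨hSD, hexc⟩
        obtain ⟨l', rfl⟩ := exc_eq_pset (hposD S hSD) hexc
        have hsum := ((hmemD _).1 hSD).2
        have hps := pset_sum l'
        rw [hsum] at hps
        rw [pent_inj l' l (by linarith [hps, hl])]
      · rintro rfl
        refine ⟨hDmem _ (pset_pos l) ?_, pset_exc l⟩
        have hps := pset_sum l
        rw [hl] at hps
        have h2 : (((pset l).sum id : ℕ) : ℤ) = (N:ℤ) := by linarith [hps]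
        exact_mod_cast h2
    rw [hfilter, Finset.sum_singleton, pset_card]
  · have hR : ∑ᶠ l : ℤ, (if (3 * l^2 - l) / 2 = (N:ℤ) then ((-1:ℤ))^l.natAbs else 0) = 0 := by
      refine finsum_eq_zero_of_forall_eq_zero ?_
      intro x
      rw [if_neg]
      intro hc
      exact hex ⟨x, (pent_div x).1 hc⟩
    rw [hR]
    have hfilter : D.filter isExc = ∅ := by
      rw [Finset.eq_empty_iff_forall_notMem]
      intro S hS
      rw [Finset.mem_filter] at hS
      obtain ⟨l', rfl⟩ := exc_eq_pset (hposD S hS.1) hS.2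
      have hsum := ((hmemD _).1 hS.1).2
      have hps := pset_sum l'
      rw [hsum] at hps
      exact hex ⟨l', by linarith [hps]⟩
    rw [hfilter, Finset.sum_empty]
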